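/- Let C be a (not necessarily commutative) ring that is a domain and in which the set of nonzero elements satisfies both the left and the right Ore condition, and let Q be the associated division ring of fractions of C (the left, equivalently right, Ore localization of C at its nonzero elements). Then for every l ≥ 1 and every finite list x₁, …, x_n of elements of the right C-module Q^{⊕l}, the right C-submodule of Q^{⊕l} generated by x₁, …, x_n is contained in a right C-submodule of Q^{⊕l} that is free of finite rank. -/

import Mathlib

noncomputable section

variable (C Q : Type*) [Ring C] [DivisionRing Q]

/-- `Q` regarded as a right `C`-module (i.e. a `Cᵐᵒᵖ`-module) via a ring map `f : C →+* Q`,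
with action `q • c = q * f c`. -/
def RightMod (f : C →+* Q) : Type _ := Q

instance (f : C →+* Q) : AddCommGroup (RightMod C Q f) := inferInstanceAs (AddCommGroup Q)

instance (f : C →+* Q) : Module Cᵐᵒᵖ (RightMod C Q f) :=
  Module.compHom Q (RingHom.op f)

/-!
Clearing denominators: by the left Ore condition the finitely many coordinates of `x₁, …, xₙ`
have a common left denominator `s`, so they all lie in `s⁻¹ C`. Hence the span lies in
`(s⁻¹ C)^l`, which is free on the basis `s⁻¹ eⱼ` because `c ↦ s⁻¹ c` is injective.
-/

open Function MulOpposite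

section

variable {C Q} {f : C →+* Q}

theorem exists_common_left_denom (hinj : Injective f)
    (hleftOre : ∀ a s : C, s ≠ 0 → ∃ b t : C, t ≠ 0 ∧ t * a = b * s)
    (hfrac_left : ∀ q : Q, ∃ c s : C, s ≠ 0 ∧ q = (f s)⁻¹ * f c)
    {S : Set Q} (hS : S.Finite) :
    ∃ s : C, s ≠ 0 ∧ ∀ q ∈ S, f s * q ∈ Set.range f := by
  induction S, hS using Set.Finite.induction_on with
  | empty =>
    have := f.domain_nontrivial
    exact ⟨1, one_ne_zero, by simp⟩
  | @insert q S _ _ ih =>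
    obtain ⟨s, hs, hS⟩ := ih
    obtain ⟨c, t, ht, rfl⟩ := hfrac_left q
    obtain ⟨b, u, hu, hut⟩ := hleftOre t s hs
    have hft : f t ≠ 0 := (map_ne_zero_iff f hinj).2 ht
    refine ⟨u * t, ?_, ?_⟩
    · rw [← map_ne_zero_iff f hinj, map_mul]
      exact mul_ne_zero ((map_ne_zero_iff f hinj).2 hu) hft
    · rintro _ (rfl | hq)
      · exact ⟨u * c, by rw [map_mul, map_mul, mul_assoc, mul_inv_cancel_left₀ hft]⟩
      · obtain ⟨d, hd⟩ := hS _ hq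
        exact ⟨b * d, by rw [hut, map_mul, map_mul, mul_assoc, hd]⟩

namespace RightMod

theorem toSpanSingleton_injective (hinj : Injective f) {q : Q} (hq : q ≠ 0) :
    Injective (LinearMap.toSpanSingleton Cᵐᵒᵖ (RightMod C Q f) q) := by
  refine (injective_iff_map_eq_zero _).2 fun c hc => unop_injective (hinj ?_)
  have hc : q * f c.unop = 0 := hc
  rw [(mul_eq_zero.1 hc).resolve_left hq, unop_zero, map_zero]

theorem toSpanSingleton_inv_apply {s c : C} {q : Q} (hs : f s ≠ 0) (h : f s * q = f c) :
    LinearMap.toSpanSingleton Cᵐᵒᵖ (RightMod C Q f) ((f s)⁻¹ : Q) (op c) = q :=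
  show (f s)⁻¹ * f c = q by rw [← h, inv_mul_cancel_left₀ hs]

end RightMod

end

theorem fg_submodule_of_fractions_le_free
    (f : C →+* Q) (hinj : Function.Injective f)
    (hleftOre : ∀ a s : C, s ≠ 0 → ∃ b t : C, t ≠ 0 ∧ t * a = b * s)
    (hfrac_left : ∀ q : Q, ∃ c s : C, s ≠ 0 ∧ q = (f s)⁻¹ * f c)
    (l : ℕ) (n : ℕ) (x : Fin n → (Fin l → RightMod C Q f)) :
    ∃ P : Submodule Cᵐᵒᵖ (Fin l → RightMod C Q f),
      Submodule.span Cᵐᵒᵖ (Set.range x) ≤ P ∧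
      ∃ m : ℕ, Nonempty (P ≃ₗ[Cᵐᵒᵖ] (Fin m → Cᵐᵒᵖ)) := by
  obtain ⟨s, hs, hden⟩ := exists_common_left_denom hinj hleftOre hfrac_left
    (Set.finite_range fun p : Fin n × Fin l => (x p.1 p.2 : Q))
  have hfs : f s ≠ 0 := (map_ne_zero_iff f hinj).2 hs
  let φ := LinearMap.piMap fun _ : Fin l =>
    LinearMap.toSpanSingleton Cᵐᵒᵖ (RightMod C Q f) ((f s)⁻¹ : Q)
  have hφ : Injective φ :=
    Injective.piMap fun _ => RightMod.toSpanSingleton_injective hinj (inv_ne_zero hfs)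
  refine ⟨LinearMap.range φ, ?_, l, ⟨(LinearEquiv.ofInjective φ hφ).symm⟩⟩
  refine Submodule.span_le.2 (Set.range_subset_iff.2 fun i => ?_)
  choose c hc using fun j => hden _ ⟨(i, j), rfl⟩
  exact ⟨fun j => op (c j), funext fun j => RightMod.toSpanSingleton_inv_apply hfs (hc j).symm⟩
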